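/- arXiv:2104.09561 — 3 statements merged into one kernel-verified Lean document; each statement's English description precedes it below -/
import Mathlib

section
/- Let Λ_t be the rank-3 lattice {x ∈ ℤ⁴ : x₀ + x₁ + x₂ + x₃ = 0}, with the alternating group A₄ ≤ S₄ acting by permuting the four coordinates. Then the second group cohomology H²(A₄, Λ_t) is the trivial group. -/
/-- The tetrahedral lattice `Λ_t = {x ∈ ℤ⁴ : x₀ + x₁ + x₂ + x₃ = 0}`,
the sum-zero sublattice of `ℤ⁴`. -/
def tetrahedralLattice : Submodule ℤ (Fin 4 → ℤ) where
  carrier := {x | ∑ i, x i = 0}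
  add_mem' := by
    intro a b ha hb
    simp only [Set.mem_setOf_eq, Pi.add_apply, Finset.sum_add_distrib] at *
    simp [ha, hb]
  zero_mem' := by simp
  smul_mem' := by
    intro c x hx
    simp only [Set.mem_setOf_eq, Pi.smul_apply, smul_eq_mul, ← Finset.mul_sum] at *
    simp [hx]

/-!
Transfer argument. If `M` restricted to a subgroup `K ≤ G` is coinduced from the trivial
subgroup, the `K`-equivariant contraction of a `2`-cocycle `f`, summed over `G ⧸ K`, is a cochain
with coboundary `[G : K] • f`; so `[G : K]` kills `H²(G, M)`. For `A₄`, `Λ_t` restricted to the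
stabilizer `C₃` of `3` is `ℤ[C₃]` (basis `eᵢ - e₃`), of index `4`. `Λ_t` is not free over the
Klein four-group `V₄`, but `ℤ⁴` is; a cochain `x` of `ℤ⁴` whose coboundary lies in `Λ_t` lies in
`Λ_t` itself, since its coordinate sum is a homomorphism `A₄ → ℤ`. So `3` kills `H²` too.
-/

open groupCohomology

universe u

lemma eq_zero_of_map_mul_eq_add {G B : Type*} [Group G] [Finite G] [AddCommGroup B]
    [IsAddTorsionFree B] {q : G → B} (hq : ∀ g h, q (g * h) = q g + q h) (g : G) : q g = 0 :=
  ((MonoidHom.mk' (fun g => Multiplicative.ofAdd (q g)) hq).isOfFinOrder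
    (isOfFinOrder_of_finite g)).eq_one'

namespace Representation

variable {k G : Type u} [CommRing k] [Group G]

section Coinduced

variable {M A : Type*} [AddCommGroup M] [Module k M] [AddCommGroup A] [Module k A]
  (ρ : Representation k G M) (K : Subgroup G) (ε : M →ₗ[k] A)

/-- `ρ` restricted to `K` is coinduced from the trivial subgroup: `v ↦ (τ ↦ ε (ρ τ v))` is an
isomorphism `M ≃ (K → A)`. -/
def IsCoinducedOn : Prop :=
  Function.Bijective (LinearMap.pi fun τ : K => ε ∘ₗ ρ τ)

namespace IsCoinducedOn

variable {ρ K ε} (hε : ρ.IsCoinducedOn K ε) (f : G × G → M)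

/-- A `K`-equivariant homogeneous 1-cochain whose coboundary is the homogenisation of `f`. -/
noncomputable def contraction (g₀ g₁ : G) : M :=
  (LinearEquiv.ofBijective _ hε).symm fun τ => ε (f (τ * g₀, g₀⁻¹ * g₁))
lemma apply_contraction {τ : G} (hτ : τ ∈ K) (g₀ g₁ : G) :
    ε (ρ τ (hε.contraction f g₀ g₁)) = ε (f (τ * g₀, g₀⁻¹ * g₁)) :=
  congrFun ((LinearEquiv.ofBijective _ hε).apply_symm_apply _) ⟨τ, hτ⟩

lemma contraction_mul_mul {h : G} (hh : h ∈ K) (g₀ g₁ : G) :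
    hε.contraction f (h * g₀) (h * g₁) = ρ h (hε.contraction f g₀ g₁) := by
  refine hε.1 (funext fun τ => ?_)
  change ε (ρ τ _) = ε (ρ τ (ρ h _))
  rw [← Module.End.mul_apply, ← map_mul, apply_contraction hε f τ.2,
    apply_contraction hε f (K.mul_mem τ.2 hh)]
  simp only [mul_assoc, mul_inv_rev, inv_mul_cancel_left]

lemma contraction_sub_add (hf : f ∈ cocycles₂ (Rep.of ρ)) (g₀ g₁ g₂ : G) :
    hε.contraction f g₁ g₂ - hε.contraction f g₀ g₂ + hε.contraction f g₀ g₁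
      = ρ g₀ (f (g₀⁻¹ * g₁, g₁⁻¹ * g₂)) := by
  refine hε.1 (funext fun τ => ?_)
  change ε (ρ τ _) = ε (ρ τ _)
  have hcoc := congrArg ε
    ((mem_cocycles₂_iff (A := Rep.of ρ) f).1 hf (τ * g₀) (g₀⁻¹ * g₁) (g₁⁻¹ * g₂))
  simp only [map_add, mul_assoc, mul_inv_cancel_left] at hcoc
  rw [← Module.End.mul_apply (ρ τ), ← map_mul]
  simp only [map_add, map_sub, apply_contraction hε f τ.2]
  rwa [sub_add_eq_add_sub, sub_eq_iff_eq_add]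

noncomputable def transferTerm (g₀ g₁ : G) : G ⧸ K → M :=
  Quotient.lift (fun t => ρ t (hε.contraction f (t⁻¹ * g₀) (t⁻¹ * g₁))) fun a b hab => by
    obtain ⟨h, hh, rfl⟩ : ∃ h ∈ K, b = a * h :=
      ⟨a⁻¹ * b, QuotientGroup.leftRel_apply.1 hab, by group⟩
    simp only [mul_inv_rev, mul_assoc,
      hε.contraction_mul_mul f (K.inv_mem hh), map_mul, Module.End.mul_apply]
    rw [← Module.End.mul_apply (ρ h), ← map_mul, mul_inv_cancel, map_one, Module.End.one_apply]

lemma transferTerm_mk (g₀ g₁ t : G) :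
    hε.transferTerm f g₀ g₁ (t : G ⧸ K) = ρ t (hε.contraction f (t⁻¹ * g₀) (t⁻¹ * g₁)) :=
  rfl

lemma transferTerm_smul (s g₀ g₁ : G) (q : G ⧸ K) :
    hε.transferTerm f (s * g₀) (s * g₁) (s • q) = ρ s (hε.transferTerm f g₀ g₁ q) := by
  induction q using QuotientGroup.induction_on with
  | H t =>
    rw [MulAction.Quotient.smul_mk, smul_eq_mul, transferTerm_mk, transferTerm_mk, map_mul,
      Module.End.mul_apply]
    simp only [mul_inv_rev, mul_assoc, inv_mul_cancel_left]

lemma transferTerm_sub_add (hf : f ∈ cocycles₂ (Rep.of ρ)) (g₀ g₁ g₂ : G) (q : G ⧸ K) :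
    hε.transferTerm f g₁ g₂ q - hε.transferTerm f g₀ g₂ q + hε.transferTerm f g₀ g₁ q
      = ρ g₀ (f (g₀⁻¹ * g₁, g₁⁻¹ * g₂)) := by
  induction q using QuotientGroup.induction_on with
  | H t =>
    simp only [transferTerm_mk, ← map_sub, ← map_add, hε.contraction_sub_add f hf, mul_inv_rev,
      inv_inv, mul_assoc, mul_inv_cancel_left]
    rw [← Module.End.mul_apply, ← map_mul, mul_inv_cancel_left]

section Transfer

variable [Fintype (G ⧸ K)]

noncomputable def transfer (g₀ g₁ : G) : M :=
  ∑ q : G ⧸ K, hε.transferTerm f g₀ g₁ q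

lemma transfer_mul_mul (s g₀ g₁ : G) :
    hε.transfer f (s * g₀) (s * g₁) = ρ s (hε.transfer f g₀ g₁) := by
  rw [transfer, transfer, map_sum, ← Equiv.sum_comp (MulAction.toPerm s)]
  exact Fintype.sum_congr _ _ (hε.transferTerm_smul f s g₀ g₁)

lemma transfer_sub_add (hf : f ∈ cocycles₂ (Rep.of ρ)) (g₀ g₁ g₂ : G) :
    hε.transfer f g₁ g₂ - hε.transfer f g₀ g₂ + hε.transfer f g₀ g₁
      = Fintype.card (G ⧸ K) • ρ g₀ (f (g₀⁻¹ * g₁, g₁⁻¹ * g₂)) := by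
  simp only [transfer, ← Finset.sum_sub_distrib, ← Finset.sum_add_distrib,
    hε.transferTerm_sub_add f hf, Finset.sum_const, Finset.card_univ]

end Transfer

end IsCoinducedOn

theorem IsCoinducedOn.index_smul_mem_coboundaries₂ {ρ : Representation k G M} {K : Subgroup G}
    {ε : M →ₗ[k] A} (hε : ρ.IsCoinducedOn K ε) {f : G × G → M} (hf : f ∈ cocycles₂ (Rep.of ρ)) :
    K.index • f ∈ coboundaries₂ (Rep.of ρ) := by
  rcases finite_or_infinite (G ⧸ K) with hK | hK
  · let := Fintype.ofFinite (G ⧸ K)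
    refine ⟨hε.transfer f 1, funext fun ⟨g, h⟩ => ?_⟩
    change ρ g (hε.transfer f 1 h) - hε.transfer f 1 (g * h) + hε.transfer f 1 g
      = K.index • f (g, h)
    rw [← hε.transfer_mul_mul, mul_one, hε.transfer_sub_add f hf, K.index_eq_card,
      Nat.card_eq_fintype_card, map_one, Module.End.one_apply, inv_one, one_mul,
      inv_mul_cancel_left]
  · rw [Subgroup.index_eq_zero_iff_infinite.2 hK, zero_smul]
    exact zero_mem _

end Coinduced

theorem isCoinducedOn_of_single {M : Type*} [AddCommGroup M] [Module k M]
    {ρ : Representation k G M} {K : Subgroup G} [Finite K] [DecidableEq K] {ε : M →ₗ[k] k}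
    (hinj : ∀ v, (∀ τ : K, ε (ρ τ v) = 0) → v = 0) (b : K → M)
    (hb : ∀ σ τ : K, ε (ρ τ (b σ)) = (Pi.single σ 1 : K → k) τ) : ρ.IsCoinducedOn K ε := by
  let := Fintype.ofFinite K
  refine ⟨(injective_iff_map_eq_zero _).2 fun v hv => hinj v fun τ => congrFun hv τ,
    fun a => ⟨∑ σ, a σ • b σ, funext fun τ => ?_⟩⟩
  simp [hb, Pi.single_apply]

def funOfMulAction (X : Type*) [MulAction G X] : Representation k G (X → k) where
  toFun g := LinearMap.funLeft k k (g⁻¹ • ·)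
  map_one' := by ext; simp
  map_mul' g h := by ext; simp [mul_smul]

theorem isCoinducedOn_funOfMulAction {X : Type*} [MulAction G X] {K : Subgroup G} {x₀ : X}
    (h : Function.Bijective fun τ : K => τ⁻¹ • x₀) :
    (funOfMulAction (k := k) X).IsCoinducedOn K (LinearMap.proj x₀) :=
  h.comp_right

section Subrepresentation

variable {V : Type*} [AddCommGroup V] [Module k V]
  {ρ : Representation k G V} {N : Submodule k V} {σ : Representation k G N}

lemma subtype_comp_mem_cocycles₂ (hσ : ∀ g v, (σ g v : V) = ρ g v) {f : G × G → N}
    (hf : f ∈ cocycles₂ (Rep.of σ)) : N.subtype ∘ f ∈ cocycles₂ (Rep.of ρ) := by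
  rw [mem_cocycles₂_iff] at hf ⊢
  intro g h j
  simpa [hσ] using congrArg Subtype.val (hf g h j)

theorem mem_coboundaries₂_of_subtype_comp [Finite G] {B : Type*} [AddCommGroup B]
    [IsAddTorsionFree B] (s : V →+ B) (hs : ∀ g v, s (ρ g v) = s v)
    (hN : ∀ v, v ∈ N ↔ s v = 0) (hσ : ∀ g v, (σ g v : V) = ρ g v) {f : G × G → N}
    (hf : N.subtype ∘ f ∈ coboundaries₂ (Rep.of ρ)) : f ∈ coboundaries₂ (Rep.of σ) := by
  obtain ⟨x, hx⟩ := hf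
  have hdx (g h : G) : ρ g (x h) - x (g * h) + x g = f (g, h) := congrFun hx (g, h)
  have hsx (g : G) : s (x g) = 0 := by
    refine eq_zero_of_map_mul_eq_add (q := fun g => s (x g)) (fun g h => ?_) g
    have := congrArg s (hdx g h)
    rw [map_add, map_sub, hs, (hN _).1 (f (g, h)).2] at this
    rw [← sub_eq_zero, ← neg_eq_zero, ← this]
    abel
  refine ⟨fun g => ⟨x g, (hN _).2 (hsx g)⟩, funext fun ⟨g, h⟩ => Subtype.ext ?_⟩
  change ((σ g ⟨x h, _⟩ : N) : V) - x (g * h) + x g = f (g, h)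
  rw [hσ, hdx]

end Subrepresentation

end Representation

open Representation MulAction alternatingGroup

local notation "A₄" => alternatingGroup (Fin 4)

lemma index_stabilizer_fin_four : (stabilizer A₄ (3 : Fin 4)).index = 4 := by
  have := isPretransitive_of_three_le_card (Fin 4) (by simp)
  rw [index_stabilizer_of_transitive, Nat.card_eq_fintype_card, Fintype.card_fin]

lemma index_kleinFour_fin_four : (kleinFour (Fin 4)).index = 3 := by
  have h := (kleinFour (Fin 4)).card_mul_index
  rw [kleinFour_card_of_card_eq_four (by simp), Nat.card_eq_fintype_card,
    show Fintype.card A₄ = 12 by decide] at h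
  omega

lemma bijective_inv_smul_kleinFour_fin_four :
    Function.Bijective fun τ : kleinFour (Fin 4) => τ⁻¹ • (0 : Fin 4) := by
  have hfree : ∀ g : A₄, g ^ 2 = 1 → g • (0 : Fin 4) = 0 → g = 1 := by decide
  refine Function.Injective.bijective_of_nat_card_le (fun σ τ hστ => ?_) ?_
  · have hsq : (τ * σ⁻¹) ^ 2 = 1 := by
      rw [← exponent_kleinFour_of_card_eq_four (α := Fin 4) (by simp)]
      exact Monoid.pow_exponent_eq_one _
    have hfix : ((τ * σ⁻¹ : kleinFour (Fin 4)) : A₄) • (0 : Fin 4) = 0 := by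
      change τ • σ⁻¹ • (0 : Fin 4) = 0
      rw [hστ, smul_inv_smul]
    have := hfree _ (by exact_mod_cast congrArg Subtype.val hsq) hfix
    exact (mul_inv_eq_one.1 (Subtype.ext this)).symm
  · rw [kleinFour_card_of_card_eq_four (by simp)]; simp

theorem tetrahedralLattice_isCoinducedOn_stabilizer
    (ρ : Representation ℤ A₄ tetrahedralLattice)
    (hρ : ∀ (σ : A₄) (v : tetrahedralLattice) (i : Fin 4),
      ((ρ σ v : Fin 4 → ℤ) i) = (v : Fin 4 → ℤ) ((σ : Equiv.Perm (Fin 4))⁻¹ i)) :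
    ρ.IsCoinducedOn (stabilizer A₄ (3 : Fin 4))
      (LinearMap.proj 0 ∘ₗ tetrahedralLattice.subtype) := by
  have hproj (τ : stabilizer A₄ (3 : Fin 4)) (v : tetrahedralLattice) :
      (LinearMap.proj 0 ∘ₗ tetrahedralLattice.subtype) (ρ τ v)
        = (v : Fin 4 → ℤ) (((τ : A₄) : Equiv.Perm (Fin 4))⁻¹ 0) :=
    hρ τ v 0
  have horbit : ∀ i : Fin 4, i ≠ 3 →
      ∃ τ : stabilizer A₄ (3 : Fin 4), ((τ : A₄) : Equiv.Perm (Fin 4))⁻¹ 0 = i := by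
    decide
  have hsingle : ∀ σ τ : stabilizer A₄ (3 : Fin 4),
      (Pi.single (σ⁻¹ • 0) 1 - Pi.single 3 1 : Fin 4 → ℤ) (((τ : A₄) : Equiv.Perm (Fin 4))⁻¹ 0)
        = (Pi.single σ 1 : _ → ℤ) τ := by
    decide
  refine isCoinducedOn_of_single (fun v hv => ?_)
    (fun σ => ⟨Pi.single (σ⁻¹ • 0) 1 - Pi.single 3 1, by simp [tetrahedralLattice]⟩)
    (fun σ τ => (hproj τ _).trans (hsingle σ τ))
  have hv' : ∀ i : Fin 4, i ≠ 3 → (v : Fin 4 → ℤ) i = 0 := fun i hi => by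
    obtain ⟨τ, rfl⟩ := horbit i hi
    rw [← hproj, hv]
  have hsum : ∑ i, (v : Fin 4 → ℤ) i = 0 := v.2
  rw [Fin.sum_univ_four, hv' 0 (by decide), hv' 1 (by decide), hv' 2 (by decide)] at hsum
  ext i
  by_cases hi : i = 3
  · subst hi; simpa using hsum
  · exact hv' i hi

/-- For the action of the alternating group `A₄` on the tetrahedral
lattice `Λ_t` by permutation of the four coordinates, `H²(A₄, Λ_t) = 0`. -/
theorem stmt0
    (ρ : Representation ℤ (alternatingGroup (Fin 4)) tetrahedralLattice)
    (hρ : ∀ (σ : alternatingGroup (Fin 4)) (v : tetrahedralLattice) (i : Fin 4),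
      ((ρ σ v : Fin 4 → ℤ) i) = (v : Fin 4 → ℤ) ((σ : Equiv.Perm (Fin 4))⁻¹ i)) :
    Subsingleton (groupCohomology (Rep.of ρ) 2) := by
  have hρ' (σ : A₄) (v : tetrahedralLattice) :
      (ρ σ v : Fin 4 → ℤ) = funOfMulAction (Fin 4) σ (v : Fin 4 → ℤ) :=
    funext (hρ σ v)
  have hcob (f : A₄ × A₄ → tetrahedralLattice) (hf : f ∈ cocycles₂ (Rep.of ρ)) :
      f ∈ coboundaries₂ (Rep.of ρ) := by
    have h4 := (tetrahedralLattice_isCoinducedOn_stabilizer ρ hρ).index_smul_mem_coboundaries₂ hf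
    rw [index_stabilizer_fin_four] at h4
    have h3 : 3 • f ∈ coboundaries₂ (Rep.of ρ) := by
      refine mem_coboundaries₂_of_subtype_comp
        (AddMonoidHom.mk' (fun v : Fin 4 → ℤ => ∑ i, v i) fun _ _ => Finset.sum_add_distrib)
        (fun g v => Equiv.sum_comp (MulAction.toPerm g⁻¹) v) (fun _ => Iff.rfl) hρ' ?_
      have := (isCoinducedOn_funOfMulAction bijective_inv_smul_kleinFour_fin_four
        ).index_smul_mem_coboundaries₂ (subtype_comp_mem_cocycles₂ hρ' hf)
      rwa [index_kleinFour_fin_four] at this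
    convert sub_mem h4 h3 using 1
    abel
  have hzero (x : groupCohomology (Rep.of ρ) 2) : x = 0 :=
    H2_induction_on x fun y => (H2π_eq_zero_iff y).2 (hcob y y.2)
  exact subsingleton_of_forall_eq 0 hzero
end

section
/- Let Λ_t be the rank-3 lattice {x ∈ ℤ⁴ : x₀ + x₁ + x₂ + x₃ = 0}, with the symmetric group S₄ acting by permuting the four coordinates. Then the second group cohomology H²(S₄, Λ_t) is isomorphic to ℤ/2ℤ. -/
/-!
Averaging the cocycle identity over its last variable shows that a 2-cocycle `F` of the finite
group `G = S₄` satisfies `|G| • F = δc` with `c g = ∑ h, F (g, h)`. Viewing `Λ_t` inside the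
permutation module `ℤ⁴`, `F` is therefore a coboundary as soon as `c` is, modulo `24`, a
coboundary of the coinduced module `(ℤ/24)⁴`; by Shapiro's lemma in degree one this is decided
by the homomorphism `h ↦ (c h)₃` on the stabiliser `S₃` of the coordinate `3`, which vanishes
as soon as it vanishes on the transposition `(0 1)`, that is, when `F((0 1), (0 1))₃ + F(1, 1)₃`
is even. That parity is thus an injective invariant `H²(S₄, Λ_t) → ℤ/2`. It is onto because of
the glide cocycle `δw / 2`, where `w` sends the odd permutations (the reflections of the
tetrahedron) to `(1, 1, 1, -3)`, a vector of `Λ_t` that is not in `2Λ_t` but is fixed by `S₄`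
modulo `2Λ_t`.
-/

open Finset Equiv Equiv.Perm groupCohomology

namespace groupCohomology

universe u

variable {k G : Type u} [CommRing k] [Group G] {A : Rep k G}

theorem card_smul_eq_d₁₂_sum [Fintype G] (f : cocycles₂ A) :
    Fintype.card G • (f : G × G → A) = (d₁₂ A).hom (fun g => ∑ h, f (g, h)) := by
  funext ⟨g, h⟩
  have hsum := congrArg (fun F : G → A => ∑ j, F j) (funext ((mem_cocycles₂_iff f).1 f.2 g h))
  simp only [sum_add_distrib, sum_const, card_univ, ← map_sum] at hsum
  rw [show ∑ j, f (g, h * j) = ∑ j, f (g, j) from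
    Equiv.sum_comp (Equiv.mulLeft h) (fun j => f (g, j))] at hsum
  simp only [Pi.smul_apply, d₁₂_hom_apply]
  rw [sub_add_eq_add_sub, eq_sub_iff_add_eq, add_comm, hsum]

noncomputable def H2AddEquivOfSurjective {B : Type*} [AddCommGroup B] (χ : cocycles₂ A →+ B)
    (hχ : Function.Surjective χ) (hker : ∀ x, χ x = 0 ↔ ⇑x ∈ coboundaries₂ A) : H2 A ≃+ B :=
  let π : cocycles₂ A →+ H2 A := (H2π A).hom.toAddMonoidHom
  have hπ : Function.Surjective π := (ModuleCat.epi_iff_surjective _).1 inferInstance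
  have hπχ : π.ker = χ.ker := AddSubgroup.ext fun x => (H2π_eq_zero_iff x).trans (hker x).symm
  (QuotientAddGroup.quotientKerEquivOfSurjective π hπ).symm.trans <|
    (QuotientAddGroup.quotientAddEquivOfEq hπχ).trans
      (QuotientAddGroup.quotientKerEquivOfSurjective χ hχ)

end groupCohomology

section Coinduced

attribute [local instance] arrowAction

variable {G X : Type*} [Group G] [MulAction G X] [MulAction.IsPretransitive G X]

theorem isCoboundary₁_of_stabilizer_apply_eq_zero {B : Type*} [AddCommGroup B] (x₀ : X)
    {ψ : G → X → B} (hψ : IsCocycle₁ ψ) (h₀ : ∀ h : G, h • x₀ = x₀ → ψ h x₀ = 0) :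
    IsCoboundary₁ ψ := by
  choose t ht using MulAction.exists_smul_eq G x₀
  have hψx (g k : G) (x : X) : ψ (g * k) x = ψ k (g⁻¹ • x) + ψ g x := congrFun (hψ g k) x
  refine ⟨fun x => -ψ (t x) x, fun g => funext fun x => ?_⟩
  set h := (t x)⁻¹ * g * t (g⁻¹ • x)
  have hx : (t x)⁻¹ • x = x₀ := inv_smul_eq_iff.2 (ht x).symm
  have hh : h • x₀ = x₀ := by simp only [h, mul_smul, ht, smul_inv_smul, hx]
  have key : ψ (g * t (g⁻¹ • x)) x = ψ (t x * h) x := by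
    simp only [h, mul_assoc, mul_inv_cancel_left]
  rw [hψx, hψx, hx, h₀ h hh, zero_add] at key
  show -ψ (t (g⁻¹ • x)) (g⁻¹ • x) - -ψ (t x) x = ψ g x
  rw [← key]
  abel

theorem exists_eq_mul_add_coboundary_of_dvd (x₀ : X) (n : ℕ) {c : G → X → ℤ}
    (hc : ∀ g h x, (n : ℤ) ∣ c h (g⁻¹ • x) - c (g * h) x + c g x)
    (h₀ : ∀ h : G, h • x₀ = x₀ → (n : ℤ) ∣ c h x₀) :
    ∃ (u : G → X → ℤ) (m : X → ℤ), ∀ g x, c g x = n * u g x + (m (g⁻¹ • x) - m x) := by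
  have hψ : IsCocycle₁ (fun g x => (c g x : ZMod n)) := fun g h => funext fun x => by
    have := (ZMod.intCast_zmod_eq_zero_iff_dvd _ n).2 (hc g h x)
    push_cast at this
    show (c (g * h) x : ZMod n) = c h (g⁻¹ • x) + c g x
    linear_combination -this
  obtain ⟨m, hm⟩ := isCoboundary₁_of_stabilizer_apply_eq_zero x₀ hψ fun h hh =>
    (ZMod.intCast_zmod_eq_zero_iff_dvd _ n).2 (h₀ h hh)
  have hdvd (g : G) (x : X) : (n : ℤ) ∣ c g x - ((m (g⁻¹ • x)).cast - (m x).cast) := by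
    have hmx : m (g⁻¹ • x) - m x = c g x := congrFun (hm g) x
    rw [← ZMod.intCast_zmod_eq_zero_iff_dvd]
    push_cast [ZMod.intCast_cast, ZMod.cast_id', id, hmx]
    exact sub_self _
  choose u hu using hdvd
  exact ⟨u, fun x => (m x).cast, fun g x => by linear_combination hu g x⟩

end Coinduced

theorem exists_conj_of_apply_three_eq (h : Perm (Fin 4)) (hh : h 3 = 3) :
    ∃ k : Perm (Fin 4), k 3 = 3 ∧
      (h = k * swap 0 1 * k⁻¹ ∨ h = k * swap 0 1 * k⁻¹ * swap 0 1) := by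
  revert h; decide

theorem eq_zero_of_map_mul_of_map_swap {B : Type*} [AddCommGroup B] {φ : Perm (Fin 4) → B}
    (hφ : ∀ g h, g 3 = 3 → h 3 = 3 → φ (g * h) = φ g + φ h) (hswap : φ (swap 0 1) = 0)
    {h : Perm (Fin 4)} (hh : h 3 = 3) : φ h = 0 := by
  have hτ : swap (0 : Fin 4) 1 3 = 3 := by decide
  have hinv {k : Perm (Fin 4)} (hk : k 3 = 3) : k⁻¹ 3 = 3 := inv_eq_iff_eq.2 hk.symm
  have hone : φ 1 = 0 := by simpa using hφ 1 1 rfl rfl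
  have hconj {k : Perm (Fin 4)} (hk : k 3 = 3) : φ (k * swap 0 1 * k⁻¹) = 0 := by
    have hkτ : (k * swap 0 1 : Perm (Fin 4)) 3 = 3 := by simp [Perm.mul_apply, hτ, hk]
    rw [hφ _ _ hkτ (hinv hk), hφ _ _ hk hτ, hswap, add_zero, ← hφ _ _ hk (hinv hk),
      mul_inv_cancel, hone]
  obtain ⟨k, hk, rfl | rfl⟩ := exists_conj_of_apply_three_eq h hh
  · exact hconj hk
  · have hc : (k * swap 0 1 * k⁻¹ : Perm (Fin 4)) 3 = 3 := by simp [Perm.mul_apply, hτ, hk, hinv hk]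
    rw [hφ _ _ hc hτ, hconj hk, hswap, add_zero]

theorem dvd_apply_three_of_even {n : ℕ} {c : Perm (Fin 4) → Fin 4 → ℤ}
    {F : Perm (Fin 4) → Perm (Fin 4) → Fin 4 → ℤ}
    (hc : ∀ g h x, c h (g⁻¹ x) - c (g * h) x + c g x = n * F g h x)
    (hF : Even (F (swap 0 1) (swap 0 1) 3 + F 1 1 3)) {h : Perm (Fin 4)} (hh : h 3 = 3) :
    (n : ℤ) ∣ c h 3 := by
  have hinv {k : Perm (Fin 4)} (hk : k 3 = 3) : k⁻¹ 3 = 3 := inv_eq_iff_eq.2 hk.symm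
  rw [← ZMod.intCast_zmod_eq_zero_iff_dvd]
  refine eq_zero_of_map_mul_of_map_swap (φ := fun k => (c k 3 : ZMod n)) (fun g k hg _ => ?_) ?_ hh
  · have := congrArg (Int.cast : ℤ → ZMod n) (hc g k 3)
    rw [hinv hg] at this
    push_cast [ZMod.natCast_self, zero_mul] at this
    linear_combination -this
  · obtain ⟨j, hj⟩ := hF
    have hτ := hc (swap 0 1) (swap 0 1) 3
    have h1 := hc 1 1 3
    rw [swap_mul_self, swap_inv, swap_apply_of_ne_of_ne (by decide) (by decide)] at hτ
    simp only [inv_one, Perm.one_apply, mul_one] at h1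
    have : 2 * c (swap 0 1) 3 = 2 * (n * j) := by linear_combination hτ + h1 + n * hj
    simp [mul_left_cancel₀ two_ne_zero this]

theorem tetrahedralLattice.sum_coe_eq_zero (v : tetrahedralLattice) : ∑ i, (v : Fin 4 → ℤ) i = 0 :=
  v.2

def parityClass : (Perm (Fin 4) × Perm (Fin 4) → tetrahedralLattice) →+ ZMod 2 where
  toFun F := (((F (swap 0 1, swap 0 1) : Fin 4 → ℤ) 3 + (F (1, 1) : Fin 4 → ℤ) 3 : ℤ) : ZMod 2)
  map_zero' := by simp
  map_add' F F' := by
    simp only [Pi.add_apply, Submodule.coe_add]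
    push_cast
    ring

def glideTranslation (g : Perm (Fin 4)) : tetrahedralLattice :=
  if sign g = 1 then 0 else ⟨![1, 1, 1, -3], show ∑ i, (![1, 1, 1, -3] : Fin 4 → ℤ) i = 0 by decide⟩

theorem two_dvd_glideTranslation (g h : Perm (Fin 4)) (x : Fin 4) :
    2 ∣ (glideTranslation h : Fin 4 → ℤ) (g⁻¹ x) - (glideTranslation (g * h) : Fin 4 → ℤ) x +
      (glideTranslation g : Fin 4 → ℤ) x := by
  have hv : ∀ y z : Fin 4, 2 ∣ (![1, 1, 1, -3] : Fin 4 → ℤ) y - ![1, 1, 1, -3] z ∧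
      2 ∣ (![1, 1, 1, -3] : Fin 4 → ℤ) y + ![1, 1, 1, -3] z := by decide
  rcases Int.units_eq_one_or (sign g) with hg | hg <;>
    rcases Int.units_eq_one_or (sign h) with hh | hh <;>
    simp [glideTranslation, Perm.sign_mul, hg, hh, hv]

def glideCocycle (p : Perm (Fin 4) × Perm (Fin 4)) : tetrahedralLattice :=
  ⟨fun x => ((glideTranslation p.2 : Fin 4 → ℤ) (p.1⁻¹ x) -
      (glideTranslation (p.1 * p.2) : Fin 4 → ℤ) x + (glideTranslation p.1 : Fin 4 → ℤ) x) / 2, by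
    obtain ⟨g, h⟩ := p
    have hhalf : 2 * ∑ x, ((glideTranslation h : Fin 4 → ℤ) (g⁻¹ x) -
        (glideTranslation (g * h) : Fin 4 → ℤ) x + (glideTranslation g : Fin 4 → ℤ) x) / 2 = 0 := by
      simp only [mul_sum, Int.mul_ediv_cancel' (two_dvd_glideTranslation g h _),
        sum_add_distrib, sum_sub_distrib, Equiv.sum_comp g⁻¹ (glideTranslation h : Fin 4 → ℤ)]
      simp only [tetrahedralLattice.sum_coe_eq_zero, sub_zero, add_zero]
    exact (mul_eq_zero.1 hhalf).resolve_left two_ne_zero⟩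

theorem parityClass_glideCocycle : parityClass glideCocycle = 1 := by
  show (((_ / 2 : ℤ) + (_ / 2 : ℤ) : ℤ) : ZMod 2) = 1
  simp [glideTranslation, swap_apply_of_ne_of_ne]
  decide

def IsPermutationRep (ρ : Representation ℤ (Perm (Fin 4)) tetrahedralLattice) : Prop :=
  ∀ (σ : Perm (Fin 4)) (v : tetrahedralLattice) (i : Fin 4),
    (ρ σ v : Fin 4 → ℤ) i = (v : Fin 4 → ℤ) (σ⁻¹ i)

namespace IsPermutationRep

variable {ρ : Representation ℤ (Perm (Fin 4)) tetrahedralLattice}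

theorem d₁₂_apply (hρ : IsPermutationRep ρ) (u : Perm (Fin 4) → tetrahedralLattice)
    (g h : Perm (Fin 4)) (x : Fin 4) :
    ((d₁₂ (Rep.of ρ)).hom u (g, h) : Fin 4 → ℤ) x =
      (u h : Fin 4 → ℤ) (g⁻¹ x) - (u (g * h) : Fin 4 → ℤ) x + (u g : Fin 4 → ℤ) x := by
  simp [hρ g (u h) x]

theorem parityClass_d₁₂ (hρ : IsPermutationRep ρ) (u : Perm (Fin 4) → tetrahedralLattice) :
    parityClass ((d₁₂ (Rep.of ρ)).hom u) = 0 := by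
  show (((_ : Fin 4 → ℤ) 3 + (_ : Fin 4 → ℤ) 3 : ℤ) : ZMod 2) = 0
  rw [hρ.d₁₂_apply, hρ.d₁₂_apply, swap_mul_self, swap_inv,
    swap_apply_of_ne_of_ne (by decide) (by decide)]
  simp only [inv_one, Perm.one_apply, mul_one]
  rw [ZMod.intCast_zmod_eq_zero_iff_dvd]
  exact ⟨(u (swap 0 1) : Fin 4 → ℤ) 3, by ring⟩

theorem mem_coboundaries₂_of_parityClass_eq_zero (hρ : IsPermutationRep ρ)
    (F : cocycles₂ (Rep.of ρ)) (hF : parityClass F = 0) : ⇑F ∈ coboundaries₂ (Rep.of ρ) := by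
  set f : Perm (Fin 4) → Perm (Fin 4) → Fin 4 → ℤ := fun g h => (F (g, h) : Fin 4 → ℤ)
  set c : Perm (Fin 4) → tetrahedralLattice := fun g => ∑ h, F (g, h)
  have hc (g h : Perm (Fin 4)) (x : Fin 4) :
      (c h : Fin 4 → ℤ) (g⁻¹ x) - (c (g * h) : Fin 4 → ℤ) x + (c g : Fin 4 → ℤ) x =
        (24 : ℕ) * f g h x := by
    rw [← hρ.d₁₂_apply, ← card_smul_eq_d₁₂_sum F]
    simp [f, Fintype.card_perm, Nat.factorial]
  have hpar : Even (f (swap 0 1) (swap 0 1) 3 + f 1 1 3) := ZMod.intCast_eq_zero_iff_even.1 hF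
  obtain ⟨u, m, hu⟩ := exists_eq_mul_add_coboundary_of_dvd (3 : Fin 4) 24
    (fun g h x => ⟨_, hc g h x⟩) (fun h hh => dvd_apply_three_of_even hc hpar hh)
  simp only [Perm.smul_def] at hu
  have hdu (g h : Perm (Fin 4)) (x : Fin 4) : u h (g⁻¹ x) - u (g * h) x + u g x = f g h x := by
    have := hc g h x
    rw [hu, hu, hu, mul_inv_rev, Perm.mul_apply] at this
    push_cast at this
    linarith
  have hsum (g : Perm (Fin 4)) : ∑ x, u g x = 0 := by
    have hcg := tetrahedralLattice.sum_coe_eq_zero (c g)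
    simp only [hu, sum_add_distrib, sum_sub_distrib, ← mul_sum,
      Equiv.sum_comp g⁻¹ m, sub_self, add_zero] at hcg
    exact (mul_eq_zero.1 hcg).resolve_left (by norm_num)
  refine ⟨fun g => ⟨u g, hsum g⟩, funext fun ⟨g, h⟩ => Subtype.ext (funext fun x => ?_)⟩
  rw [hρ.d₁₂_apply]
  exact hdu g h x

theorem glideCocycle_mem_cocycles₂ (hρ : IsPermutationRep ρ) :
    glideCocycle ∈ cocycles₂ (Rep.of ρ) := by
  have htwo : (2 : ℤ) • glideCocycle = (d₁₂ (Rep.of ρ)).hom glideTranslation :=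
    funext fun ⟨g, h⟩ => Subtype.ext <| funext fun x => by
      rw [hρ.d₁₂_apply, ← Int.mul_ediv_cancel' (two_dvd_glideTranslation g h x)]
      rfl
  have h := congrArg (d₂₃ (Rep.of ρ)).hom htwo
  rw [map_zsmul, d₁₂_comp_d₂₃_apply] at h
  exact (smul_eq_zero.1 h).resolve_left two_ne_zero

end IsPermutationRep

/-- For the action of the symmetric group `S₄` on the tetrahedral
lattice `Λ_t` by permutation of the four coordinates, `H²(S₄, Λ_t) ≅ ℤ/2ℤ`. -/
theorem stmt1
    (ρ : Representation ℤ (Equiv.Perm (Fin 4)) tetrahedralLattice)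
    (hρ : ∀ (σ : Equiv.Perm (Fin 4)) (v : tetrahedralLattice) (i : Fin 4),
      ((ρ σ v : Fin 4 → ℤ) i) = (v : Fin 4 → ℤ) (σ⁻¹ i)) :
    Nonempty (groupCohomology (Rep.of ρ) 2 ≃+ ZMod 2) := by
  have hρ' : IsPermutationRep ρ := hρ
  let χ := parityClass.comp (cocycles₂ (Rep.of ρ)).subtype.toAddMonoidHom
  let glide : cocycles₂ (Rep.of ρ) := ⟨glideCocycle, hρ'.glideCocycle_mem_cocycles₂⟩
  have hglide : χ glide = 1 := parityClass_glideCocycle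
  refine ⟨H2AddEquivOfSurjective χ (fun z => ⟨z.val • glide, ?_⟩)
    fun F => ⟨hρ'.mem_coboundaries₂_of_parityClass_eq_zero F, ?_⟩⟩
  · rw [map_nsmul, hglide, nsmul_one, ZMod.natCast_zmod_val]
  · rintro ⟨u, hu⟩
    show parityClass F = 0
    rw [← hu]
    exact hρ'.parityClass_d₁₂ u
end

section
/- Let pg = ℤ ⋊ ℤ be the Klein bottle group, the semidirect product with multiplication (x, y)·(x′, y′) = (x + (−1)^y x′, y + y′), and let ℤ_o be the pg-module with underlying group ℤ on which (x, y) ∈ pg acts by multiplication by (−1)^y. Then the second group cohomology H²(pg, ℤ_o) is isomorphic to ℤ. -/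
/-- The Klein bottle (wallpaper) group `pg = ℤ ⋊ ℤ`, with multiplication
`(x, y)·(x′, y′) = (x + (−1)^y x′, y + y′)`: the generator of the acting `ℤ`
factor acts on the normal `ℤ` factor by negation. -/
abbrev pgGroup :=
  Multiplicative ℤ ⋊[zpowersHom (MulAut (Multiplicative ℤ)) (MulEquiv.inv (Multiplicative ℤ))]
    Multiplicative ℤ

/-- The orientation module `ℤ_o`: the `pg`-module with underlying group `ℤ` on which
`(x, y)` acts by multiplication by `(−1)^y`. -/
noncomputable def zo : Representation ℤ pgGroup ℤ :=
  (Units.coeHom (Module.End ℤ ℤ)).comp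
    ((zpowersHom (Module.End ℤ ℤ)ˣ (-1)).comp SemidirectProduct.rightHom)

/-!
A 2-cocycle `f` of `pg` with values in a module `A` defines a group extension `A ×_f pg`. As `pg`
has the presentation `⟨a, b | a b a = b⟩`, if the lifts `α = (0, a)` and `β = (0, b)` satisfy
`α β α = β`, which happens exactly when `f (a, b) + f (a b, a) = 0`, they define a section, and
then `f` is a coboundary. When `a` acts trivially and `b` by `-1`, this functional kills the
coboundaries and takes the value `m` on the cocycle `(g, h) ↦ -(-1)^y(g) y(g) x(h) • m`, where
`g = (x(g), y(g))`, so it induces `H²(pg, A) ≅ A`.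
-/

open Multiplicative

theorem MulAut.zpow_apply_of_apply_eq_inv {H : Type*} [Group H] {σ : MulAut H} {x : H}
    (h : σ x = x⁻¹) (r : ℤ) : (σ ^ r) x = x ^ (r.negOnePow : ℤ) := by
  induction r using Int.induction_on with
  | zero => simp
  | succ r ih =>
    rw [zpow_add_one, MulAut.mul_apply, h, map_inv, ih, Int.negOnePow_succ]
    simp [zpow_neg]
  | pred r ih =>
    have h' : σ⁻¹ x = x⁻¹ := by
      rw [MulAut.inv_apply, MulEquiv.symm_apply_eq, map_inv, h, inv_inv]
    rw [sub_eq_add_neg, zpow_add, zpow_neg_one, MulAut.mul_apply, h', map_inv, ih,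
      Int.negOnePow_add]
    simp [zpow_neg]

theorem MulAut.conj_apply_eq_inv_of_mul_mul_eq {H : Type*} [Group H] {α β : H}
    (h : α * β * α = β) : MulAut.conj β α = α⁻¹ := by
  rw [MulAut.conj_apply, mul_inv_eq_iff_eq_mul, eq_inv_mul_iff_mul_eq, ← mul_assoc, h]

theorem Units.val_neg_one_zpow {R : Type*} [Ring R] (n : ℤ) :
    (((-1 : Rˣ) ^ n : Rˣ) : R) = ((n.negOnePow : ℤ) : R) := by
  rcases Int.even_or_odd n with hn | hn
  · simp [hn.neg_one_zpow, Int.negOnePow_even _ hn]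
  · simp [hn.neg_one_zpow, Int.negOnePow_odd _ hn]

universe u

namespace groupCohomology

variable {k G : Type u} [CommRing k] [Group G] {A : Rep k G}

@[ext]
structure CocycleExtension (f : cocycles₂ A) where
  fiber : A
  base : G

namespace CocycleExtension

variable {f : cocycles₂ A}

/-- `f` need not be normalised: the unit is `(-f (1, 1), 1)`. -/
instance : Group (CocycleExtension f) where
  mul p q := ⟨p.fiber + A.ρ p.base q.fiber + f (p.base, q.base), p.base * q.base⟩
  one := ⟨-f (1, 1), 1⟩
  inv p := ⟨-A.ρ p.base⁻¹ p.fiber - f (p.base⁻¹, p.base) - f (1, 1), p.base⁻¹⟩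
  mul_assoc p q r := by
    refine CocycleExtension.ext ?_ (mul_assoc _ _ _)
    change p.fiber + A.ρ p.base q.fiber + f (p.base, q.base) + A.ρ (p.base * q.base) r.fiber
      + f (p.base * q.base, r.base) = p.fiber
      + A.ρ p.base (q.fiber + A.ρ q.base r.fiber + f (q.base, r.base)) + f (p.base, q.base * r.base)
    have hf := (mem_cocycles₂_iff f).1 f.2 p.base q.base r.base
    rw [map_mul, Module.End.mul_apply, map_add, map_add]
    linear_combination (norm := module) hf
  one_mul p := by
    refine CocycleExtension.ext ?_ (one_mul _)
    change -f (1, 1) + A.ρ 1 p.fiber + f (1, p.base) = p.fiber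
    rw [cocycles₂_map_one_fst f p.base, map_one, Module.End.one_apply]
    abel
  mul_one p := by
    refine CocycleExtension.ext ?_ (mul_one _)
    change p.fiber + A.ρ p.base (-f (1, 1)) + f (p.base, 1) = p.fiber
    rw [cocycles₂_map_one_snd f p.base, map_neg]
    abel
  inv_mul_cancel p := by
    refine CocycleExtension.ext ?_ (inv_mul_cancel _)
    change -A.ρ p.base⁻¹ p.fiber - f (p.base⁻¹, p.base) - f (1, 1) + A.ρ p.base⁻¹ p.fiber
      + f (p.base⁻¹, p.base) = -f (1, 1)
    abel

@[simp]
theorem mul_fiber (p q : CocycleExtension f) :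
    (p * q).fiber = p.fiber + A.ρ p.base q.fiber + f (p.base, q.base) :=
  rfl

@[simp]
theorem mul_base (p q : CocycleExtension f) : (p * q).base = p.base * q.base :=
  rfl

def baseHom : CocycleExtension f →* G where
  toFun := base
  map_one' := rfl
  map_mul' _ _ := rfl

theorem mem_coboundaries₂_of_section (s : G →* CocycleExtension f)
    (hs : baseHom.comp s = MonoidHom.id G) : ⇑f ∈ coboundaries₂ A := by
  have hbase (g : G) : (s g).base = g := DFunLike.congr_fun hs g
  refine ⟨fun g => -(s g).fiber, funext fun ⟨g, h⟩ => ?_⟩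
  have hmul := congrArg fiber (map_mul s g h)
  simp only [mul_fiber, hbase] at hmul
  simp only [d₁₂_hom_apply, map_neg]
  rw [hmul]
  abel

end CocycleExtension

end groupCohomology

namespace pgGroup

open SemidirectProduct groupCohomology

def a : pgGroup := inl (ofAdd 1)

def b : pgGroup := inr (ofAdd 1)

theorem a_mul_b_mul_a : a * b * a = b := by
  ext <;> simp [a, b]

theorem inv_zpow_apply (r : ℤ) (x : Multiplicative ℤ) :
    (MulEquiv.inv (Multiplicative ℤ) ^ r) x = x ^ (r.negOnePow : ℤ) :=
  MulAut.zpow_apply_of_apply_eq_inv rfl r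

theorem hom_ext {H : Type*} [Group H] {φ ψ : pgGroup →* H} (ha : φ a = ψ a) (hb : φ b = ψ b) :
    φ = ψ :=
  SemidirectProduct.hom_ext (MonoidHom.ext_mint ha) (MonoidHom.ext_mint hb)

def lift {H : Type*} [Group H] (α β : H) (h : α * β * α = β) : pgGroup →* H :=
  SemidirectProduct.lift (zpowersHom H α) (zpowersHom H β) fun r => by
    refine MonoidHom.ext_mint ?_
    have hconj := MulAut.conj_apply_eq_inv_of_mul_mul_eq h
    simp [inv_zpow_apply, MulAut.zpow_apply_of_apply_eq_inv hconj]

def sign : pgGroup →* ℤˣ := (zpowersHom ℤˣ (-1)).comp rightHom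

theorem sign_apply (g : pgGroup) : sign g = (toAdd g.right).negOnePow := rfl

@[simp] theorem sign_a : sign a = 1 := rfl

@[simp] theorem sign_b : sign b = -1 := rfl

theorem toAdd_left_mul (g h : pgGroup) :
    toAdd (g * h).left = toAdd g.left + (sign g : ℤ) * toAdd h.left := by
  simp [sign_apply, inv_zpow_apply, mul_comm]

variable {k : Type} [CommRing k] {A : Rep k pgGroup}

variable (A) in
/-- The fibre coordinate of `α β α` in `CocycleExtension f`, where `α = (0, a)` and `β = (0, b)`. -/
def relatorValue : (pgGroup × pgGroup → A) →ₗ[k] A :=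
  LinearMap.proj (R := k) (φ := fun _ => A) (a, b) + LinearMap.proj (a * b, a)

theorem mem_coboundaries₂_of_relatorValue_eq_zero (f : cocycles₂ A)
    (hf : relatorValue A f = 0) : ⇑f ∈ coboundaries₂ A := by
  let α : CocycleExtension f := ⟨0, a⟩
  let β : CocycleExtension f := ⟨0, b⟩
  have hαβ : α * β * α = β := by
    refine CocycleExtension.ext ?_ a_mul_b_mul_a
    simpa [α, β, relatorValue] using hf
  exact CocycleExtension.mem_coboundaries₂_of_section (lift α β hαβ) (hom_ext rfl rfl)

theorem relatorValue_d₁₂ (hA : ∀ g (m : A), A.ρ g m = (sign g : ℤ) • m) (η : pgGroup → A) :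
    relatorValue A ((d₁₂ A).hom η) = 0 := by
  simp only [relatorValue, LinearMap.add_apply, LinearMap.proj_apply, d₁₂_hom_apply, map_mul,
    Module.End.mul_apply, hA, sign_a, sign_b, a_mul_b_mul_a]
  simp only [Units.val_one, Units.val_neg, one_smul, neg_smul, smul_neg]
  abel

theorem mem_coboundaries₂_iff_relatorValue_eq_zero (hA : ∀ g (m : A), A.ρ g m = (sign g : ℤ) • m)
    (f : cocycles₂ A) : ⇑f ∈ coboundaries₂ A ↔ relatorValue A f = 0 := by
  refine ⟨?_, mem_coboundaries₂_of_relatorValue_eq_zero f⟩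
  rintro ⟨η, hη⟩
  rw [← hη]
  exact relatorValue_d₁₂ hA η

def fundamentalCocycle (m : A) : pgGroup × pgGroup → A :=
  fun x => (-(sign x.1 : ℤ) * toAdd x.1.right * toAdd x.2.left) • m

theorem fundamentalCocycle_mem_cocycles₂ (hA : ∀ g (m : A), A.ρ g m = (sign g : ℤ) • m) (m : A) :
    fundamentalCocycle m ∈ cocycles₂ A := by
  rw [mem_cocycles₂_def]
  intro g h j
  simp only [fundamentalCocycle, hA, smul_smul, ← sub_smul, ← add_smul, toAdd_left_mul, map_mul,
    Units.val_mul, SemidirectProduct.mul_right, toAdd_mul]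
  convert zero_smul ℤ m using 2
  ring

theorem relatorValue_fundamentalCocycle (m : A) : relatorValue A (fundamentalCocycle m) = m := by
  simp [relatorValue, fundamentalCocycle, a, b, sign_apply]

noncomputable def H2LinearEquiv (hA : ∀ g (m : A), A.ρ g m = (sign g : ℤ) • m) :
    H2 A ≃ₗ[k] A :=
  let Φ := relatorValue A ∘ₗ (cocycles₂ A).subtype
  have hker : LinearMap.ker (H2π A).hom = LinearMap.ker Φ := by
    ext f
    exact (H2π_eq_zero_iff f).trans (mem_coboundaries₂_iff_relatorValue_eq_zero hA f)
  have hπ : Function.Surjective (H2π A) := (ModuleCat.epi_iff_surjective _).1 inferInstance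
  have hΦ : Function.Surjective Φ := fun m =>
    ⟨⟨fundamentalCocycle m, fundamentalCocycle_mem_cocycles₂ hA m⟩,
      relatorValue_fundamentalCocycle m⟩
  ((H2π A).hom.quotKerEquivOfSurjective hπ).symm ≪≫ₗ Submodule.quotEquivOfEq _ _ hker ≪≫ₗ
    Φ.quotKerEquivOfSurjective hΦ

end pgGroup

theorem zo_apply (g : pgGroup) (n : ℤ) : zo g n = (pgGroup.sign g : ℤ) • n := by
  change (((-1 : (Module.End ℤ ℤ)ˣ) ^ toAdd g.right : (Module.End ℤ ℤ)ˣ) : Module.End ℤ ℤ) n = _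
  rw [Units.val_neg_one_zpow, Module.End.intCast_apply, pgGroup.sign_apply]

/-- `H²(pg, ℤ_o) ≅ ℤ`. -/
theorem stmt6 : Nonempty (groupCohomology (Rep.of zo) 2 ≃+ ℤ) :=
  ⟨(pgGroup.H2LinearEquiv (A := Rep.of zo) zo_apply).toAddEquiv⟩
end
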